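/- arXiv:1902.02329 — 2 statements merged into one kernel-verified Lean document; each statement's English description precedes it below -/
import Mathlib

section
/- Let p ∈ (0,1] ∪ [2,∞), let (X, 𝒜, μ) be a measure space and let (f_j)_{j≥1} be a sequence of measurable functions f_j : X → [0,∞). Then ∫ (∑_j f_j)^p dμ ≥ ∑_j ∫ f_j^p dμ + (2^p − 2) · ∑_{i<j} ∫ (f_i f_j)^{p/2} dμ, where the sums on the right range over all j ≥ 1 and all pairs i < j, and both sides are interpreted in [0,∞] (for p ∈ (0,1] note 2^p − 2 ≤ 0, so the right-hand side is interpreted as a difference of two finite quantities whenever they are finite, and the inequality is asserted in that case; for p ≥ 2 both sides lie in [0,∞]). -/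
/-!
For two summands write `y = s x` with `0 < s ≤ 1`. The two-term inequality says that
`s ↦ ((1 + s) ^ p - 1 - s ^ p) / s ^ (p / 2)` is at least its value `2 ^ p - 2` at `s = 1`; it is
in fact antitone on `(0, 1]`, since its derivative has the sign of
`1 - s ^ p - (1 - s) (1 + s) ^ (p - 1)`, which is nonpositive for `p ≤ 1` (tangent lines of `exp`)
and for `p ≥ 2` (Bernoulli's inequality).

The general case follows by induction on the number of summands: adding `f n` to
`S = ∑_{i<n} f i` produces the cross term `(S f n) ^ (p / 2)`, which dominates
`∑_{i<n} (f i f n) ^ (p / 2)` when `p / 2 ≥ 1` and is dominated by it when `p / 2 ≤ 1`, matching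
the sign of `2 ^ p - 2`. Monotone convergence passes to infinite sums and integrals.
-/

open MeasureTheory Real Set
open scoped ENNReal
open Finset (range sum_range_succ sum_mul mul_sum sum_add_distrib sum_congr)

theorem pos_of_mem_Ioc_union_Ici {p : ℝ} (hp : p ∈ Ioc 0 1 ∪ Ici 2) : 0 < p := by
  rcases hp with h | h; exacts [h.1, by linarith [mem_Ici.1 h]]

namespace Real

theorem one_sub_rpow_le_mul_one_add_rpow_of_le_one {p s : ℝ} (hp : p ≤ 1) (hs0 : 0 < s)
    (hs1 : s ≤ 1) : 1 - s ^ p ≤ (1 - s) * (1 + s) ^ (p - 1) := by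
  -- The tangent lines at `x = s` and `x = 1 + s` reduce this to
  -- `s log s + (1 - s) log (1 + s) ≤ 0`.
  have tangent {x : ℝ} (hx : 0 < x) : 1 + (p - 1) * log x ≤ x ^ (p - 1) := by
    rw [rpow_def_of_pos hx]
    linarith [add_one_le_exp (log x * (p - 1)), mul_comm (log x) (p - 1)]
  have hs : s * (1 + (p - 1) * log s) ≤ s ^ p :=
    calc s * (1 + (p - 1) * log s) ≤ s * s ^ (p - 1) := by gcongr; exact tangent hs0
      _ = s ^ p := by rw [rpow_sub_one hs0.ne']; field_simp
  have h1s := tangent (by linarith : 0 < 1 + s)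
  have hlog : log s ≤ s - 1 := log_le_sub_one_of_pos hs0
  have hlog1 : log (1 + s) ≤ s := by linarith [log_le_sub_one_of_pos (by linarith : 0 < 1 + s)]
  have key : s * log s + (1 - s) * log (1 + s) ≤ 0 := by
    nlinarith [mul_le_mul_of_nonneg_left hlog hs0.le,
      mul_le_mul_of_nonneg_left hlog1 (sub_nonneg.2 hs1)]
  nlinarith [mul_le_mul_of_nonneg_left h1s (sub_nonneg.2 hs1),
    mul_nonneg (sub_nonneg.2 hp) (neg_nonneg.2 key)]

theorem one_sub_rpow_le_mul_one_add_rpow_of_two_le {p s : ℝ} (hp : 2 ≤ p) (hs0 : 0 ≤ s)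
    (hs1 : s ≤ 1) : 1 - s ^ p ≤ (1 - s) * (1 + s) ^ (p - 1) := by
  have hs : 1 + (p - 1) * -(1 - s) ≤ s ^ (p - 1) := by
    simpa using one_add_mul_self_le_rpow_one_add (by linarith : -1 ≤ -(1 - s))
      (by linarith : 1 ≤ p - 1)
  have h1s : 1 + (p - 1) * s ≤ (1 + s) ^ (p - 1) :=
    one_add_mul_self_le_rpow_one_add (by linarith) (by linarith)
  have hsp : s ^ p = s * s ^ (p - 1) := by
    rw [← rpow_one_add' hs0 (by linarith), add_sub_cancel]
  calc 1 - s ^ p ≤ (1 - s) * (1 + (p - 1) * s) := by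
        rw [hsp]; nlinarith [mul_le_mul_of_nonneg_left hs hs0]
    _ ≤ (1 - s) * (1 + s) ^ (p - 1) := by gcongr

theorem antitoneOn_one_add_rpow_sub_rpow_mul_rpow_neg {p : ℝ} (hp : p ∈ Ioc 0 1 ∪ Ici 2) :
    AntitoneOn (fun s : ℝ => ((1 + s) ^ p - 1 - s ^ p) * s ^ (-(p / 2))) (Ioc 0 1) := by
  have hp0 := pos_of_mem_Ioc_union_Ici hp
  have hderiv (s : ℝ) (hs : 0 < s) :
      HasDerivAt (fun s : ℝ => ((1 + s) ^ p - 1 - s ^ p) * s ^ (-(p / 2)))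
        ((p * (1 + s) ^ (p - 1) - p * s ^ (p - 1)) * s ^ (-(p / 2))
          + ((1 + s) ^ p - 1 - s ^ p) * (-(p / 2) * s ^ (-(p / 2) - 1))) s := by
    have h1 : HasDerivAt (fun s : ℝ => (1 + s) ^ p) (p * (1 + s) ^ (p - 1)) s := by
      simpa using ((hasDerivAt_id' s).const_add 1).rpow_const (p := p) (Or.inl (by linarith))
    exact ((h1.sub_const 1).sub (hasDerivAt_rpow_const (Or.inl hs.ne'))).mul
      (hasDerivAt_rpow_const (Or.inl hs.ne'))
  refine antitoneOn_of_hasDerivWithinAt_nonpos (convex_Ioc 0 1)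
    (fun s hs => (hderiv s hs.1).continuousAt.continuousWithinAt)
    (fun s hs => (hderiv s (interior_subset hs).1).hasDerivWithinAt) ?_
  intro s hs
  rw [interior_Ioc] at hs
  obtain ⟨hs0, hs1⟩ := hs
  have hcore : 1 - s ^ p ≤ (1 - s) * (1 + s) ^ (p - 1) := by
    rcases hp with hp | hp
    · exact one_sub_rpow_le_mul_one_add_rpow_of_le_one hp.2 hs0 hs1.le
    · exact one_sub_rpow_le_mul_one_add_rpow_of_two_le hp hs0.le hs1.le
  have h1s : (1 + s) ^ p = (1 + s) * (1 + s) ^ (p - 1) := by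
    rw [rpow_sub_one (by linarith), mul_div_cancel₀ _ (by linarith)]
  have hderiv_eq : (p * (1 + s) ^ (p - 1) - p * s ^ (p - 1)) * s ^ (-(p / 2))
        + ((1 + s) ^ p - 1 - s ^ p) * (-(p / 2) * s ^ (-(p / 2) - 1))
      = p / 2 * (s ^ (-(p / 2)) / s) * ((1 - s ^ p) - (1 - s) * (1 + s) ^ (p - 1)) := by
    rw [rpow_sub_one hs0.ne', rpow_sub_one hs0.ne', h1s]
    field_simp
    ring
  rw [hderiv_eq]
  exact mul_nonpos_of_nonneg_of_nonpos (by positivity) (by linarith)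

theorem one_add_rpow_add_mul_rpow_le {p s : ℝ} (hp : p ∈ Ioc 0 1 ∪ Ici 2) (hs0 : 0 ≤ s)
    (hs1 : s ≤ 1) : 1 + s ^ p + (2 ^ p - 2) * s ^ (p / 2) ≤ (1 + s) ^ p := by
  have hp0 := pos_of_mem_Ioc_union_Ici hp
  rcases hs0.eq_or_lt with rfl | hs0
  · simp [zero_rpow hp0.ne', zero_rpow (half_pos hp0).ne']
  have h : 2 ^ p - 2 ≤ ((1 + s) ^ p - 1 - s ^ p) * s ^ (-(p / 2)) := by
    have := antitoneOn_one_add_rpow_sub_rpow_mul_rpow_neg hp ⟨hs0, hs1⟩ ⟨one_pos, le_rfl⟩ hs1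
    norm_num at this
    linarith
  calc 1 + s ^ p + (2 ^ p - 2) * s ^ (p / 2)
      ≤ 1 + s ^ p + ((1 + s) ^ p - 1 - s ^ p) * s ^ (-(p / 2)) * s ^ (p / 2) := by gcongr
    _ = (1 + s) ^ p := by
      rw [mul_assoc, ← rpow_add hs0, neg_add_cancel, rpow_zero]; ring

theorem rpow_add_rpow_add_mul_rpow_le {p x y : ℝ} (hp : p ∈ Ioc 0 1 ∪ Ici 2) (hx : 0 ≤ x)
    (hy : 0 ≤ y) : x ^ p + y ^ p + (2 ^ p - 2) * (x * y) ^ (p / 2) ≤ (x + y) ^ p := by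
  wlog hyx : y ≤ x generalizing x y
  · simpa only [add_comm, mul_comm] using this hy hx (le_of_not_ge hyx)
  have hp0 := pos_of_mem_Ioc_union_Ici hp
  rcases hx.eq_or_lt with rfl | hx0
  · obtain rfl : y = 0 := le_antisymm hyx hy
    simp [zero_rpow hp0.ne', zero_rpow (half_pos hp0).ne']
  obtain ⟨s, hs0, hs1, rfl⟩ : ∃ s, 0 ≤ s ∧ s ≤ 1 ∧ y = x * s :=
    ⟨y / x, div_nonneg hy hx, (div_le_one hx0).2 hyx, by field_simp⟩
  calc x ^ p + (x * s) ^ p + (2 ^ p - 2) * (x * (x * s)) ^ (p / 2)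
      = x ^ p * (1 + s ^ p + (2 ^ p - 2) * s ^ (p / 2)) := by
        rw [← mul_assoc, mul_rpow hx hs0, mul_rpow (mul_nonneg hx hx) hs0, mul_rpow hx hx,
          ← rpow_add hx0, add_halves]
        ring
    _ ≤ x ^ p * (1 + s) ^ p := by gcongr; exact one_add_rpow_add_mul_rpow_le hp hs0 hs1
    _ = (x + x * s) ^ p := by rw [← mul_rpow hx (by linarith), mul_one_add]

end Real

namespace ENNReal

-- Both ranges of `p` at once: one of the two coefficients is `0`.
theorem rpow_add_rpow_add_mul_rpow_le {p : ℝ} (hp : p ∈ Ioc 0 1 ∪ Ici 2) (a b : ℝ≥0∞) :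
    a ^ p + b ^ p + ENNReal.ofReal (2 ^ p - 2) * (a * b) ^ (p / 2)
      ≤ (a + b) ^ p + ENNReal.ofReal (2 - 2 ^ p) * (a * b) ^ (p / 2) := by
  have hp0 := pos_of_mem_Ioc_union_Ici hp
  rcases eq_or_ne a ⊤ with rfl | ha
  · simp [top_rpow_of_pos hp0]
  rcases eq_or_ne b ⊤ with rfl | hb
  · simp [top_rpow_of_pos hp0]
  lift a to NNReal using ha
  lift b to NNReal using hb
  have h := Real.rpow_add_rpow_add_mul_rpow_le hp a.coe_nonneg b.coe_nonneg
  simp only [ENNReal.ofReal, ← coe_mul, ← coe_add, ← coe_rpow_of_nonneg _ hp0.le,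
    ← coe_rpow_of_nonneg _ (half_pos hp0).le, coe_le_coe, ← NNReal.coe_le_coe]
  simp only [NNReal.coe_add, NNReal.coe_mul, NNReal.coe_rpow, Real.coe_toNNReal']
  rcases le_total ((2 : ℝ) ^ p) 2 with h2 | h2
  · rw [max_eq_right (by linarith), max_eq_left (by linarith)]; linarith
  · rw [max_eq_left (by linarith), max_eq_right (by linarith)]; linarith

theorem sum_rpow_le_rpow_sum {ι : Type*} {q : ℝ} (hq : 1 ≤ q) (s : Finset ι) (g : ι → ℝ≥0∞) :
    ∑ i ∈ s, g i ^ q ≤ (∑ i ∈ s, g i) ^ q := by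
  classical
  induction s using Finset.induction_on with
  | empty => simp [zero_rpow_of_pos (by linarith : (0 : ℝ) < q)]
  | insert a s ha ih =>
    rw [Finset.sum_insert ha, Finset.sum_insert ha]
    calc g a ^ q + ∑ i ∈ s, g i ^ q ≤ g a ^ q + (∑ i ∈ s, g i) ^ q := by gcongr
      _ ≤ (g a + ∑ i ∈ s, g i) ^ q := add_rpow_le_rpow_add _ _ hq

theorem rpow_sum_le_sum_rpow {ι : Type*} {q : ℝ} (hq0 : 0 < q) (hq1 : q ≤ 1) (s : Finset ι)
    (g : ι → ℝ≥0∞) : (∑ i ∈ s, g i) ^ q ≤ ∑ i ∈ s, g i ^ q := by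
  classical
  induction s using Finset.induction_on with
  | empty => simp [zero_rpow_of_pos hq0]
  | insert a s ha ih =>
    rw [Finset.sum_insert ha, Finset.sum_insert ha]
    calc (g a + ∑ i ∈ s, g i) ^ q ≤ g a ^ q + (∑ i ∈ s, g i) ^ q :=
          rpow_add_le_add_rpow _ _ hq0.le hq1
      _ ≤ g a ^ q + ∑ i ∈ s, g i ^ q := by gcongr

theorem rpow_tsum_le_tsum_rpow {ι : Type*} {q : ℝ} (hq0 : 0 < q) (hq1 : q ≤ 1)
    (g : ι → ℝ≥0∞) : (∑' i, g i) ^ q ≤ ∑' i, g i ^ q := by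
  rw [ENNReal.tsum_eq_iSup_sum]
  calc (⨆ s : Finset ι, ∑ i ∈ s, g i) ^ q = ⨆ s : Finset ι, (∑ i ∈ s, g i) ^ q :=
        (orderIsoRpow q hq0).map_iSup _
    _ ≤ ∑' i, g i ^ q :=
        iSup_le fun s => (rpow_sum_le_sum_rpow hq0 hq1 s g).trans (ENNReal.sum_le_tsum s)

theorem tsum_tsum_ite_lt (f : ℕ → ℕ → ℝ≥0∞) :
    (∑' (i : ℕ) (j : ℕ), if i < j then f i j else 0) = ∑' j, ∑ i ∈ range j, f i j := by
  rw [ENNReal.tsum_comm]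
  refine tsum_congr fun j => ?_
  rw [tsum_eq_sum (s := range j) fun i hi => if_neg (by simpa using hi)]
  exact sum_congr rfl fun i hi => if_pos (Finset.mem_range.1 hi)

end ENNReal

section CrossTerms

variable {p : ℝ}

theorem ofReal_two_rpow_sub_two_mul_sum_rpow_half_le (hp : p ∈ Ioc 0 1 ∪ Ici 2)
    {ι : Type*} (s : Finset ι) (g : ι → ℝ≥0∞) :
    ENNReal.ofReal (2 ^ p - 2) * ∑ i ∈ s, g i ^ (p / 2)
      ≤ ENNReal.ofReal (2 ^ p - 2) * (∑ i ∈ s, g i) ^ (p / 2) := by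
  rcases hp with hp | hp
  · have h2 : (2 : ℝ) ^ p ≤ 2 := by simpa using rpow_le_rpow_of_exponent_le one_le_two hp.2
    simp [ENNReal.ofReal_of_nonpos (sub_nonpos.2 h2)]
  · gcongr
    exact ENNReal.sum_rpow_le_rpow_sum (by linarith [mem_Ici.1 hp]) s g

theorem ofReal_two_sub_two_rpow_mul_rpow_half_sum_le (hp : p ∈ Ioc 0 1 ∪ Ici 2)
    {ι : Type*} (s : Finset ι) (g : ι → ℝ≥0∞) :
    ENNReal.ofReal (2 - 2 ^ p) * (∑ i ∈ s, g i) ^ (p / 2)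
      ≤ ENNReal.ofReal (2 - 2 ^ p) * ∑ i ∈ s, g i ^ (p / 2) := by
  rcases hp with hp | hp
  · gcongr
    exact ENNReal.rpow_sum_le_sum_rpow (by linarith [hp.1]) (by linarith [hp.2]) s g
  · have h2 : (2 : ℝ) ≤ 2 ^ p := by
      simpa using rpow_le_rpow_of_exponent_le one_le_two (by linarith [mem_Ici.1 hp] : 1 ≤ p)
    simp [ENNReal.ofReal_of_nonpos (sub_nonpos.2 h2)]

theorem sum_rpow_add_mul_sum_cross_le (hp : p ∈ Ioc 0 1 ∪ Ici 2) (g : ℕ → ℝ≥0∞) (n : ℕ) :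
    ∑ j ∈ range n, g j ^ p
        + ENNReal.ofReal (2 ^ p - 2) * ∑ j ∈ range n, ∑ i ∈ range j, (g i * g j) ^ (p / 2)
      ≤ (∑ j ∈ range n, g j) ^ p
        + ENNReal.ofReal (2 - 2 ^ p) * ∑ j ∈ range n, ∑ i ∈ range j, (g i * g j) ^ (p / 2) := by
  have hp0 := pos_of_mem_Ioc_union_Ici hp
  induction n with
  | zero => simp [ENNReal.zero_rpow_of_pos hp0]
  | succ n ih =>
    set S := ∑ j ∈ range n, g j
    set Q := ∑ j ∈ range n, ∑ i ∈ range j, (g i * g j) ^ (p / 2)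
    set c := ENNReal.ofReal (2 ^ p - 2)
    set d := ENNReal.ofReal (2 - 2 ^ p)
    have hcross : ∑ i ∈ range n, (g i * g n) ^ (p / 2)
        = (∑ i ∈ range n, g i ^ (p / 2)) * g n ^ (p / 2) := by
      rw [sum_mul]
      exact sum_congr rfl fun i _ => ENNReal.mul_rpow_of_nonneg _ _ (half_pos hp0).le
    have hS : (S * g n) ^ (p / 2) = S ^ (p / 2) * g n ^ (p / 2) :=
      ENNReal.mul_rpow_of_nonneg _ _ (half_pos hp0).le
    rw [sum_range_succ, sum_range_succ, sum_range_succ, hcross]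
    calc ∑ j ∈ range n, g j ^ p + g n ^ p
          + c * (Q + (∑ i ∈ range n, g i ^ (p / 2)) * g n ^ (p / 2))
        = (∑ j ∈ range n, g j ^ p + c * Q) + g n ^ p
          + c * (∑ i ∈ range n, g i ^ (p / 2)) * g n ^ (p / 2) := by ring
      _ ≤ (S ^ p + d * Q) + g n ^ p + c * S ^ (p / 2) * g n ^ (p / 2) := by
        gcongr ?_ + _ + ?_ * _
        exact ofReal_two_rpow_sub_two_mul_sum_rpow_half_le hp _ g
      _ = (S ^ p + g n ^ p + c * (S * g n) ^ (p / 2)) + d * Q := by rw [hS]; ring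
      _ ≤ ((S + g n) ^ p + d * (S * g n) ^ (p / 2)) + d * Q := by
        gcongr ?_ + _
        exact ENNReal.rpow_add_rpow_add_mul_rpow_le hp S (g n)
      _ = (S + g n) ^ p + (d * Q + d * S ^ (p / 2) * g n ^ (p / 2)) := by rw [hS]; ring
      _ ≤ (S + g n) ^ p + (d * Q + d * (∑ i ∈ range n, g i ^ (p / 2)) * g n ^ (p / 2)) := by
        gcongr _ + (_ + ?_ * _)
        exact ofReal_two_sub_two_rpow_mul_rpow_half_sum_le hp _ g
      _ = (S + g n) ^ p + d * (Q + (∑ i ∈ range n, g i ^ (p / 2)) * g n ^ (p / 2)) := by ring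

theorem tsum_rpow_add_mul_tsum_cross_le (hp : p ∈ Ioc 0 1 ∪ Ici 2) (g : ℕ → ℝ≥0∞) :
    ∑' j, g j ^ p + ENNReal.ofReal (2 ^ p - 2) * ∑' j, ∑ i ∈ range j, (g i * g j) ^ (p / 2)
      ≤ (∑' j, g j) ^ p
        + ENNReal.ofReal (2 - 2 ^ p) * ∑' j, ∑ i ∈ range j, (g i * g j) ^ (p / 2) := by
  rw [← ENNReal.tsum_mul_left, ← ENNReal.tsum_add]
  refine ENNReal.tsum_le_of_sum_range_le fun n => ?_
  rw [sum_add_distrib, ← mul_sum]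
  refine (sum_rpow_add_mul_sum_cross_le hp g n).trans ?_
  gcongr
  · exact (pos_of_mem_Ioc_union_Ici hp).le
  all_goals exact ENNReal.sum_le_tsum _

theorem tsum_lintegral_rpow_add_mul_tsum_cross_le {X : Type*} [MeasurableSpace X]
    (μ : Measure X) (hp : p ∈ Ioc 0 1 ∪ Ici 2) {f : ℕ → X → ℝ≥0∞}
    (hf : ∀ j, AEMeasurable (f j) μ) :
    ∑' j, ∫⁻ x, f j x ^ p ∂μ
        + ENNReal.ofReal (2 ^ p - 2) * ∑' j, ∑ i ∈ range j, ∫⁻ x, (f i x * f j x) ^ (p / 2) ∂μ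
      ≤ ∫⁻ x, (∑' j, f j x) ^ p ∂μ
        + ENNReal.ofReal (2 - 2 ^ p) * ∑' j, ∑ i ∈ range j, ∫⁻ x, (f i x * f j x) ^ (p / 2) ∂μ := by
  have hcross : AEMeasurable (fun x => ∑' j, ∑ i ∈ range j, (f i x * f j x) ^ (p / 2)) μ := by
    fun_prop
  have hswap : ∑' j, ∑ i ∈ range j, ∫⁻ x, (f i x * f j x) ^ (p / 2) ∂μ
      = ∫⁻ x, ∑' j, ∑ i ∈ range j, (f i x * f j x) ^ (p / 2) ∂μ := by
    rw [lintegral_tsum fun j => by fun_prop]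
    exact tsum_congr fun j => (lintegral_finsetSum' _ fun i _ => by fun_prop).symm
  rw [hswap, ← lintegral_tsum fun j => by fun_prop,
    ← lintegral_const_mul' _ _ ENNReal.ofReal_ne_top,
    ← lintegral_const_mul' _ _ ENNReal.ofReal_ne_top]
  exact (le_lintegral_add _ _).trans <|
    (lintegral_mono fun x => tsum_rpow_add_mul_tsum_cross_le hp fun j => f j x).trans_eq
      (lintegral_add_right' _ (hcross.const_mul _))

end CrossTerms

theorem statement12_general
    {X : Type*} [MeasurableSpace X] (μ : Measure X) (p : ℝ)
    (hp : p ∈ Set.Ioc (0 : ℝ) 1 ∪ Set.Ici (2 : ℝ))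
    (f : ℕ → X → ℝ≥0∞) (hf : ∀ j, Measurable (f j)) :
    (p ≤ 1 →
      (∑' j, ∫⁻ x, f j x ^ p ∂μ) ≠ ∞ →
      (∑' (i : ℕ) (j : ℕ), if i < j then ∫⁻ x, (f i x * f j x) ^ (p / 2) ∂μ else 0) ≠ ∞ →
      (∑' j, ∫⁻ x, f j x ^ p ∂μ).toReal +
          ((2 : ℝ) ^ p - 2) *
            (∑' (i : ℕ) (j : ℕ),
              if i < j then ∫⁻ x, (f i x * f j x) ^ (p / 2) ∂μ else 0).toReal ≤
        (∫⁻ x, (∑' j, f j x) ^ p ∂μ).toReal) ∧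
    (2 ≤ p →
      (∑' j, ∫⁻ x, f j x ^ p ∂μ) +
          ENNReal.ofReal ((2 : ℝ) ^ p - 2) *
            (∑' (i : ℕ) (j : ℕ),
              if i < j then ∫⁻ x, (f i x * f j x) ^ (p / 2) ∂μ else 0) ≤
        ∫⁻ x, (∑' j, f j x) ^ p ∂μ) := by
  have key := tsum_lintegral_rpow_add_mul_tsum_cross_le μ hp fun j => (hf j).aemeasurable
  simp only [ENNReal.tsum_tsum_ite_lt]
  refine ⟨fun hp1 hA hB => ?_, fun hp2 => ?_⟩
  · have h2 : (2 : ℝ) ^ p ≤ 2 := by simpa using rpow_le_rpow_of_exponent_le one_le_two hp1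
    rw [ENNReal.ofReal_of_nonpos (sub_nonpos.2 h2), zero_mul, add_zero] at key
    have hC : ∫⁻ x, (∑' j, f j x) ^ p ∂μ ≠ ∞ := by
      refine ne_top_of_le_ne_top hA ?_
      rw [← lintegral_tsum fun j => (hf j).aemeasurable.pow_const p]
      exact lintegral_mono fun x =>
        ENNReal.rpow_tsum_le_tsum_rpow (pos_of_mem_Ioc_union_Ici hp) hp1 _
    have key_real := ENNReal.toReal_mono (by finiteness) key
    rw [ENNReal.toReal_add hC (by finiteness), ENNReal.toReal_mul,
      ENNReal.toReal_ofReal (sub_nonneg.2 h2)] at key_real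
    linarith
  · have h2 : (2 : ℝ) ≤ 2 ^ p := by
      simpa using rpow_le_rpow_of_exponent_le one_le_two (by linarith : (1 : ℝ) ≤ p)
    simpa [ENNReal.ofReal_of_nonpos (sub_nonpos.2 h2)] using key

/-- Corollary 2 (lower bound), for `p ∈ (0,1] ∪ [2,∞)`:
`‖∑_j f_j‖_p^p ≥ ∑_j ‖f_j‖_p^p + (2^p - 2) ∑_{i<j} ‖f_i f_j‖_{p/2}^{p/2}`.
For `p ∈ (0,1]` the coefficient `2^p - 2` is nonpositive, and following the statement the
right-hand side is interpreted as a difference of the two quantities whenever they are finite;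
for `p ≥ 2` both sides are interpreted in `[0,∞]`. -/
theorem statement12
    {X : Type*} [MeasurableSpace X] (μ : Measure X) (p : ℝ)
    (hp : p ∈ Set.Ioc (0 : ℝ) 1 ∪ Set.Ici (2 : ℝ))
    (f : ℕ → X → ℝ≥0∞) (hf : ∀ j, Measurable (f j)) (hffin : ∀ j x, f j x ≠ ∞) :
    (p ≤ 1 →
      (∑' j, ∫⁻ x, f j x ^ p ∂μ) ≠ ∞ →
      (∑' (i : ℕ) (j : ℕ), if i < j then ∫⁻ x, (f i x * f j x) ^ (p / 2) ∂μ else 0) ≠ ∞ →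
      (∑' j, ∫⁻ x, f j x ^ p ∂μ).toReal +
          ((2 : ℝ) ^ p - 2) *
            (∑' (i : ℕ) (j : ℕ),
              if i < j then ∫⁻ x, (f i x * f j x) ^ (p / 2) ∂μ else 0).toReal ≤
        (∫⁻ x, (∑' j, f j x) ^ p ∂μ).toReal) ∧
    (2 ≤ p →
      (∑' j, ∫⁻ x, f j x ^ p ∂μ) +
          ENNReal.ofReal ((2 : ℝ) ^ p - 2) *
            (∑' (i : ℕ) (j : ℕ),
              if i < j then ∫⁻ x, (f i x * f j x) ^ (p / 2) ∂μ else 0) ≤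
        ∫⁻ x, (∑' j, f j x) ^ p ∂μ) :=
  statement12_general μ p hp f hf
end

section
/- Let p > 0 and let Ω := {(x,y,z) ∈ ℝ³ : x ≥ 0, y ≥ 0, 0 ≤ z ≤ √(xy)}. Let H : Ω → ℝ be continuous, convex on Ω, and positively one-homogeneous (H(λu) = λH(u) for λ ≥ 0, u ∈ Ω), and suppose H(x, y, √(xy)) = (x^{1/p} + y^{1/p})^p for all x, y > 0 and H(x, y, 0) = x + y for all x, y ≥ 0. Then for any measure space (X, 𝒜, μ) and any measurable f, g : X → [0,∞) with ∫ f^p dμ < ∞ and ∫ g^p dμ < ∞, one has ∫ (f+g)^p dμ ≥ H( ∫ f^p dμ, ∫ g^p dμ, ∫ (fg)^{p/2} dμ ). -/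
/-!
Jensen's inequality `H (∫ F dμ) ≤ ∫ H ∘ F dμ` holds for an arbitrary, possibly infinite, measure
when `H` is convex, lower semicontinuous and positively homogeneous on a closed convex cone:
Hahn–Banach gives affine minorants of `H` that come arbitrarily close to `H` at a given point, and
homogeneity forces their constant term to be `≤ 0` and their linear part to stay below `H`; linear
functionals commute with the integral. Apply this to `F = (f^p, g^p, (fg)^{p/2})`, which takes
values in `Ω` and whose integral lies in `Ω` by Cauchy–Schwarz; the boundary values of `H` give
`H ∘ F = (f + g)^p`.
-/

open MeasureTheory Real Set
open scoped ENNReal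

namespace ConvexOn

variable {E : Type*} [NormedAddCommGroup E] [NormedSpace ℝ E] {K : Set E} {H : E → ℝ}

theorem exists_clm_le_of_lt_of_homogeneous (hK : IsClosed K) (hHc : LowerSemicontinuousOn H K)
    (hH : ConvexOn ℝ K H) (hKsmul : ∀ c : ℝ, 0 ≤ c → ∀ u ∈ K, c • u ∈ K)
    (hHsmul : ∀ c : ℝ, 0 ≤ c → ∀ u ∈ K, H (c • u) = c * H u)
    {u₀ : E} (hu₀ : u₀ ∈ K) {a : ℝ} (ha : a < H u₀) :
    ∃ l : StrongDual ℝ E, (∀ u ∈ K, l u ≤ H u) ∧ a ≤ l u₀ := by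
  obtain ⟨l, c, hle, hlu₀⟩ := hH.exists_affine_le_of_lt (𝕜 := ℝ) hu₀ ha hK hHc
  have hle' : ∀ u ∈ K, l u + c ≤ H u := fun u hu => by simpa using hle ⟨u, hu⟩
  have hc : c ≤ 0 := by
    have h0 : H 0 = 0 := by simpa using hHsmul 0 le_rfl u₀ hu₀
    simpa [h0] using hle' 0 (by simpa using hKsmul 0 le_rfl u₀ hu₀)
  refine ⟨l, fun u hu => ?_, by simp only [RCLike.re_to_real] at hlu₀; linarith⟩
  by_contra! hlt
  -- the affine bound fails at `t • u`, where `t (H u - l u) = c - 1`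
  set t := (c - 1) / (H u - l u)
  have ht : 0 ≤ t := div_nonneg_of_nonpos (by linarith) (by linarith)
  have hscaled := hle' (t • u) (hKsmul t ht u hu)
  rw [hHsmul t ht u hu, map_smul, smul_eq_mul] at hscaled
  have ht_mul : t * (H u - l u) = c - 1 := div_mul_cancel₀ _ (by linarith)
  nlinarith

theorem map_integral_le_of_homogeneous [CompleteSpace E] {X : Type*} [MeasurableSpace X]
    {μ : Measure X} (hK : IsClosed K) (hHc : LowerSemicontinuousOn H K) (hH : ConvexOn ℝ K H)
    (hKsmul : ∀ c : ℝ, 0 ≤ c → ∀ u ∈ K, c • u ∈ K)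
    (hHsmul : ∀ c : ℝ, 0 ≤ c → ∀ u ∈ K, H (c • u) = c * H u)
    {F : X → E} (hF : Integrable F μ) (hHF : Integrable (fun x => H (F x)) μ)
    (hFK : ∀ᵐ x ∂μ, F x ∈ K) (hFint : ∫ x, F x ∂μ ∈ K) :
    H (∫ x, F x ∂μ) ≤ ∫ x, H (F x) ∂μ := by
  refine le_of_forall_lt_imp_le_of_dense fun a ha => ?_
  obtain ⟨l, hlH, hal⟩ := hH.exists_clm_le_of_lt_of_homogeneous hK hHc hKsmul hHsmul hFint ha
  calc a ≤ l (∫ x, F x ∂μ) := hal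
    _ = ∫ x, l (F x) ∂μ := (l.integral_comp_comm hF).symm
    _ ≤ ∫ x, H (F x) ∂μ :=
      integral_mono_ae (l.integrable_comp hF) hHF (hFK.mono fun x hx => hlH _ hx)

end ConvexOn

def sqrtCone : Set (ℝ × ℝ × ℝ) :=
  {u | 0 ≤ u.1 ∧ 0 ≤ u.2.1 ∧ 0 ≤ u.2.2 ∧ u.2.2 ≤ √(u.1 * u.2.1)}

theorem isClosed_sqrtCone : IsClosed sqrtCone := by
  have c1 : Continuous fun u : ℝ × ℝ × ℝ => u.1 := continuous_fst
  have c2 : Continuous fun u : ℝ × ℝ × ℝ => u.2.1 := continuous_fst.comp continuous_snd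
  have c3 : Continuous fun u : ℝ × ℝ × ℝ => u.2.2 := continuous_snd.comp continuous_snd
  exact (isClosed_le continuous_const c1).inter <| (isClosed_le continuous_const c2).inter <|
    (isClosed_le continuous_const c3).inter (isClosed_le c3 (c1.mul c2).sqrt)

theorem smul_mem_sqrtCone {c : ℝ} (hc : 0 ≤ c) {u : ℝ × ℝ × ℝ} (hu : u ∈ sqrtCone) :
    c • u ∈ sqrtCone := by
  obtain ⟨h1, h2, h3, h4⟩ := hu
  refine ⟨mul_nonneg hc h1, mul_nonneg hc h2, mul_nonneg hc h3, ?_⟩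
  have : √(c * u.1 * (c * u.2.1)) = c * √(u.1 * u.2.1) := by
    rw [show c * u.1 * (c * u.2.1) = c ^ 2 * (u.1 * u.2.1) by ring, sqrt_mul (sq_nonneg c),
      sqrt_sq hc]
  simpa [this] using mul_le_mul_of_nonneg_left h4 hc

noncomputable def rpowTriple (p α β : ℝ) : ℝ × ℝ × ℝ :=
  (α ^ p, β ^ p, (α * β) ^ (p / 2))

theorem sqrt_rpow_mul_rpow {α β : ℝ} (hα : 0 ≤ α) (hβ : 0 ≤ β) (p : ℝ) :
    √(α ^ p * β ^ p) = (α * β) ^ (p / 2) := by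
  rw [← mul_rpow hα hβ, sqrt_eq_rpow, ← rpow_mul (mul_nonneg hα hβ)]
  ring_nf

theorem rpowTriple_mem_sqrtCone {α β : ℝ} (hα : 0 ≤ α) (hβ : 0 ≤ β) (p : ℝ) :
    rpowTriple p α β ∈ sqrtCone :=
  ⟨rpow_nonneg hα p, rpow_nonneg hβ p, rpow_nonneg (mul_nonneg hα hβ) _,
    (sqrt_rpow_mul_rpow hα hβ p).ge⟩

theorem apply_rpowTriple {p : ℝ} (hp : 0 < p) {H : ℝ × ℝ × ℝ → ℝ}
    (Hbdry1 : ∀ x y : ℝ, 0 < x → 0 < y →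
      H (x, y, √(x * y)) = (x ^ (1 / p) + y ^ (1 / p)) ^ p)
    (Hbdry2 : ∀ x y : ℝ, 0 ≤ x → 0 ≤ y → H (x, y, 0) = x + y)
    {α β : ℝ} (hα : 0 ≤ α) (hβ : 0 ≤ β) :
    H (rpowTriple p α β) = (α + β) ^ p := by
  have hp2 : p / 2 ≠ 0 := by positivity
  rw [rpowTriple]
  obtain rfl | hα := hα.eq_or_lt
  · simp [zero_rpow hp.ne', zero_rpow hp2, Hbdry2 0 (β ^ p) le_rfl (rpow_nonneg hβ p)]
  obtain rfl | hβ := hβ.eq_or_lt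
  · simp [zero_rpow hp.ne', zero_rpow hp2, Hbdry2 (α ^ p) 0 (rpow_nonneg hα.le p) le_rfl]
  rw [← sqrt_rpow_mul_rpow hα.le hβ.le, Hbdry1 _ _ (rpow_pos_of_pos hα p) (rpow_pos_of_pos hβ p),
    one_div, rpow_rpow_inv hα.le hp.ne', rpow_rpow_inv hβ.le hp.ne']

section Integrals

variable {X : Type*} [MeasurableSpace X] {μ : Measure X}

theorem integrable_toReal_rpow {f : X → ℝ≥0∞} (hf : AEMeasurable f μ) {q : ℝ}
    (hfq : ∫⁻ x, f x ^ q ∂μ ≠ ∞) : Integrable (fun x => (f x).toReal ^ q) μ := by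
  simpa only [ENNReal.toReal_rpow] using integrable_toReal_of_lintegral_ne_top (hf.pow_const q) hfq

theorem integral_toReal_rpow {f : X → ℝ≥0∞} (hf : AEMeasurable f μ) (hfin : ∀ x, f x ≠ ∞)
    {q : ℝ} (hq : 0 ≤ q) : ∫ x, (f x).toReal ^ q ∂μ = (∫⁻ x, f x ^ q ∂μ).toReal := by
  simpa only [ENNReal.toReal_rpow] using integral_toReal (hf.pow_const q)
    (ae_of_all _ fun x => ENNReal.rpow_lt_top_of_nonneg hq (hfin x))

variable {f g : X → ℝ≥0∞} {p : ℝ}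

theorem lintegral_mul_rpow_half_le (hf : AEMeasurable f μ) (hg : AEMeasurable g μ) (hp : 0 ≤ p) :
    ∫⁻ x, (f x * g x) ^ (p / 2) ∂μ ≤
      (∫⁻ x, f x ^ p ∂μ) ^ (1 / 2 : ℝ) * (∫⁻ x, g x ^ p ∂μ) ^ (1 / 2 : ℝ) := by
  have hsq : ∀ a : ℝ≥0∞, (a ^ (p / 2)) ^ (2 : ℝ) = a ^ p := fun a => by
    rw [← ENNReal.rpow_mul, div_mul_cancel₀ p two_ne_zero]
  simp_rw [ENNReal.mul_rpow_of_nonneg _ _ (by positivity : 0 ≤ p / 2)]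
  simpa only [Pi.mul_apply, hsq] using
    ENNReal.lintegral_mul_le_Lp_mul_Lq μ Real.HolderConjugate.two_two
      (hf.pow_const (p / 2)) (hg.pow_const (p / 2))

theorem lintegral_mul_rpow_half_ne_top (hf : AEMeasurable f μ) (hg : AEMeasurable g μ)
    (hp : 0 ≤ p) (hfp : ∫⁻ x, f x ^ p ∂μ ≠ ∞) (hgp : ∫⁻ x, g x ^ p ∂μ ≠ ∞) :
    ∫⁻ x, (f x * g x) ^ (p / 2) ∂μ ≠ ∞ :=
  ne_top_of_le_ne_top (ENNReal.mul_ne_top (ENNReal.rpow_ne_top_of_nonneg (by norm_num) hfp)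
    (ENNReal.rpow_ne_top_of_nonneg (by norm_num) hgp)) (lintegral_mul_rpow_half_le hf hg hp)

theorem toReal_lintegral_mul_rpow_half_le (hf : AEMeasurable f μ) (hg : AEMeasurable g μ)
    (hp : 0 ≤ p) (hfp : ∫⁻ x, f x ^ p ∂μ ≠ ∞) (hgp : ∫⁻ x, g x ^ p ∂μ ≠ ∞) :
    (∫⁻ x, (f x * g x) ^ (p / 2) ∂μ).toReal ≤
      √((∫⁻ x, f x ^ p ∂μ).toReal * (∫⁻ x, g x ^ p ∂μ).toReal) := by
  rw [sqrt_eq_rpow, mul_rpow ENNReal.toReal_nonneg ENNReal.toReal_nonneg, ENNReal.toReal_rpow,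
    ENNReal.toReal_rpow, ← ENNReal.toReal_mul]
  exact ENNReal.toReal_mono (ENNReal.mul_ne_top (ENNReal.rpow_ne_top_of_nonneg (by norm_num) hfp)
    (ENNReal.rpow_ne_top_of_nonneg (by norm_num) hgp)) (lintegral_mul_rpow_half_le hf hg hp)

theorem integrable_toReal_mul_rpow_half (hf : AEMeasurable f μ) (hg : AEMeasurable g μ) (hp : 0 ≤ p)
    (hfp : ∫⁻ x, f x ^ p ∂μ ≠ ∞) (hgp : ∫⁻ x, g x ^ p ∂μ ≠ ∞) :
    Integrable (fun x => ((f x).toReal * (g x).toReal) ^ (p / 2)) μ := by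
  simpa only [ENNReal.toReal_mul] using integrable_toReal_rpow (f := fun x => f x * g x) (hf.mul hg)
    (lintegral_mul_rpow_half_ne_top hf hg hp hfp hgp)

theorem integrable_rpowTriple (hf : AEMeasurable f μ) (hg : AEMeasurable g μ) (hp : 0 ≤ p)
    (hfp : ∫⁻ x, f x ^ p ∂μ ≠ ∞) (hgp : ∫⁻ x, g x ^ p ∂μ ≠ ∞) :
    Integrable (fun x => rpowTriple p (f x).toReal (g x).toReal) μ :=
  (integrable_toReal_rpow hf hfp).prodMk ((integrable_toReal_rpow hg hgp).prodMk
    (integrable_toReal_mul_rpow_half hf hg hp hfp hgp))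

theorem integral_rpowTriple (hf : AEMeasurable f μ) (hg : AEMeasurable g μ) (hp : 0 ≤ p)
    (hfp : ∫⁻ x, f x ^ p ∂μ ≠ ∞) (hgp : ∫⁻ x, g x ^ p ∂μ ≠ ∞)
    (hffin : ∀ x, f x ≠ ∞) (hgfin : ∀ x, g x ≠ ∞) :
    ∫ x, rpowTriple p (f x).toReal (g x).toReal ∂μ = ((∫⁻ x, f x ^ p ∂μ).toReal,
      (∫⁻ x, g x ^ p ∂μ).toReal, (∫⁻ x, (f x * g x) ^ (p / 2) ∂μ).toReal) := by
  have hfg := integrable_toReal_mul_rpow_half hf hg hp hfp hgp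
  simp only [rpowTriple]
  rw [integral_pair (integrable_toReal_rpow hf hfp)
      ((integrable_toReal_rpow hg hgp).prodMk hfg),
    integral_pair (integrable_toReal_rpow hg hgp) hfg, integral_toReal_rpow hf hffin hp,
    integral_toReal_rpow hg hgfin hp, ← integral_toReal_rpow (f := fun x => f x * g x) (hf.mul hg)
      (fun x => ENNReal.mul_ne_top (hffin x) (hgfin x)) (by positivity)]
  simp only [ENNReal.toReal_mul]

end Integrals

/-- Lemma (GeneralConcavity), convex case, for `p > 0`: if `H` is continuous, convex and
positively one-homogeneous on the cone `Ω = {x,y ≥ 0, 0 ≤ z ≤ √(xy)}`, with boundary values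
`H(x,y,√(xy)) = (x^{1/p}+y^{1/p})^p` and `H(x,y,0) = x + y`, then
`‖f+g‖_p^p ≥ H(‖f‖_p^p, ‖g‖_p^p, ‖fg‖_{p/2}^{p/2})`. -/
theorem statement15
    {X : Type*} [MeasurableSpace X] (μ : Measure X) (p : ℝ) (hp : 0 < p)
    (Ω : Set (ℝ × ℝ × ℝ))
    (hΩ : Ω = {u : ℝ × ℝ × ℝ |
      0 ≤ u.1 ∧ 0 ≤ u.2.1 ∧ 0 ≤ u.2.2 ∧ u.2.2 ≤ Real.sqrt (u.1 * u.2.1)})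
    (H : ℝ × ℝ × ℝ → ℝ)
    (Hcont : ContinuousOn H Ω)
    (Hconv : ConvexOn ℝ Ω H)
    (Hhom : ∀ c : ℝ, 0 ≤ c → ∀ u ∈ Ω, H (c • u) = c * H u)
    (Hbdry1 : ∀ x y : ℝ, 0 < x → 0 < y →
      H (x, y, Real.sqrt (x * y)) = (x ^ (1 / p) + y ^ (1 / p)) ^ p)
    (Hbdry2 : ∀ x y : ℝ, 0 ≤ x → 0 ≤ y → H (x, y, 0) = x + y)
    (f g : X → ℝ≥0∞) (hf : Measurable f) (hg : Measurable g)
    (hffin : ∀ x, f x ≠ ∞) (hgfin : ∀ x, g x ≠ ∞)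
    (hfp : ∫⁻ x, f x ^ p ∂μ ≠ ∞) (hgp : ∫⁻ x, g x ^ p ∂μ ≠ ∞) :
    ENNReal.ofReal (H ((∫⁻ x, f x ^ p ∂μ).toReal, (∫⁻ x, g x ^ p ∂μ).toReal,
        (∫⁻ x, (f x * g x) ^ (p / 2) ∂μ).toReal)) ≤
      ∫⁻ x, (f x + g x) ^ p ∂μ := by
  subst hΩ
  by_cases hsum : ∫⁻ x, (f x + g x) ^ p ∂μ = ∞
  · simp [hsum]
  have hfplusg : AEMeasurable (fun x => f x + g x) μ := (hf.add hg).aemeasurable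
  have hHF : ∀ x, H (rpowTriple p (f x).toReal (g x).toReal) = (f x + g x).toReal ^ p :=
    fun x => by rw [apply_rpowTriple hp Hbdry1 Hbdry2 ENNReal.toReal_nonneg ENNReal.toReal_nonneg,
      ENNReal.toReal_add (hffin x) (hgfin x)]
  have hint := integral_rpowTriple hf.aemeasurable hg.aemeasurable hp.le hfp hgp hffin hgfin
  have hJensen := Hconv.map_integral_le_of_homogeneous isClosed_sqrtCone
    Hcont.lowerSemicontinuousOn (fun c hc u hu => smul_mem_sqrtCone hc hu) Hhom
    (integrable_rpowTriple hf.aemeasurable hg.aemeasurable hp.le hfp hgp)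
    (by simpa only [hHF] using integrable_toReal_rpow hfplusg hsum)
    (ae_of_all _ fun x => rpowTriple_mem_sqrtCone ENNReal.toReal_nonneg ENNReal.toReal_nonneg p)
    (hint ▸ ⟨ENNReal.toReal_nonneg, ENNReal.toReal_nonneg, ENNReal.toReal_nonneg,
      toReal_lintegral_mul_rpow_half_le hf.aemeasurable hg.aemeasurable hp.le hfp hgp⟩)
  rw [hint, integral_congr_ae (ae_of_all _ hHF), integral_toReal_rpow hfplusg
    (fun x => ENNReal.add_ne_top.2 ⟨hffin x, hgfin x⟩) hp.le] at hJensen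
  exact ENNReal.ofReal_le_of_le_toReal hJensen
end
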